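/- The matrix of the rotation induced by M(z) = (ζz - ω)/(ω̄z + ζ̄), namely [[Re(ζ²-ω²), -Im(ζ²+ω²), 2Re(ζω)], [Im(ζ²-ω²), Re(ζ²+ω²), 2Im(ζω)], [-2Re(ζω̄), 2Im(ζω̄), |ζ|²-|ω|²]] with |ζ|² + |ω|² = 1, is a special orthogonal matrix (element of SO(3, ℝ)). -/

import Mathlib

/-!
Writing `ζ = a + b i` and `ω = c + d i`, the matrix is the Euler–Rodrigues rotation matrix of the
quaternion `(a, b, c, d)`. For a quaternion of squared norm `s` this matrix `R` satisfies the
polynomial identities `R * Rᵀ = s² • 1` and `det R = s³`, so `s = 1` puts it in `SO(3)`.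
-/

namespace Matrix

variable {R : Type*} [CommRing R]

/-- Not the textbook coordinate order: here `a + b i` and `c + d i` are the first row of the
corresponding element of `SU(2)`. -/
def eulerRodrigues (a b c d : R) : Matrix (Fin 3) (Fin 3) R :=
  !![a ^ 2 - b ^ 2 - c ^ 2 + d ^ 2, -(2 * a * b + 2 * c * d), 2 * (a * c - b * d);
     2 * a * b - 2 * c * d, a ^ 2 - b ^ 2 + c ^ 2 - d ^ 2, 2 * (a * d + b * c);
     -2 * (a * c + b * d), 2 * (b * c - a * d), a ^ 2 + b ^ 2 - c ^ 2 - d ^ 2]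

theorem eulerRodrigues_mul_transpose (a b c d : R) :
    eulerRodrigues a b c d * (eulerRodrigues a b c d)ᵀ =
      (a ^ 2 + b ^ 2 + c ^ 2 + d ^ 2) ^ 2 • (1 : Matrix (Fin 3) (Fin 3) R) := by
  ext i j
  fin_cases i <;> fin_cases j <;>
    simp [eulerRodrigues, mul_apply, Fin.sum_univ_succ] <;> ring

theorem det_eulerRodrigues (a b c d : R) :
    (eulerRodrigues a b c d).det = (a ^ 2 + b ^ 2 + c ^ 2 + d ^ 2) ^ 3 := by
  rw [eulerRodrigues, det_fin_three]
  simp only [of_apply, cons_val', cons_val_zero, cons_val_one, cons_val, cons_val_fin_one]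
  ring

theorem eulerRodrigues_mem_specialOrthogonalGroup {a b c d : R}
    (h : a ^ 2 + b ^ 2 + c ^ 2 + d ^ 2 = 1) :
    eulerRodrigues a b c d ∈ specialOrthogonalGroup (Fin 3) R := by
  rw [mem_specialOrthogonalGroup_iff, mem_orthogonalGroup_iff, eulerRodrigues_mul_transpose,
    det_eulerRodrigues, h]
  simp

end Matrix

open Complex Matrix

theorem stmt_11 (ζ ω : ℂ) (h : ‖ζ‖ ^ 2 + ‖ω‖ ^ 2 = 1) :
    (!![(ζ ^ 2 - ω ^ 2).re, -(ζ ^ 2 + ω ^ 2).im, 2 * (ζ * ω).re;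
        (ζ ^ 2 - ω ^ 2).im, (ζ ^ 2 + ω ^ 2).re, 2 * (ζ * ω).im;
        -2 * (ζ * (starRingEnd ℂ) ω).re, 2 * (ζ * (starRingEnd ℂ) ω).im,
          ‖ζ‖ ^ 2 - ‖ω‖ ^ 2]) ∈
      Matrix.specialOrthogonalGroup (Fin 3) ℝ := by
  simp only [← normSq_eq_norm_sq, normSq_apply] at h ⊢
  convert eulerRodrigues_mem_specialOrthogonalGroup (a := ζ.re) (b := ζ.im) (c := ω.re)
    (d := ω.im) (by linear_combination h) using 1
  ext i j
  fin_cases i <;> fin_cases j <;> simp [eulerRodrigues, sq] <;> ring
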